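/- arXiv:2006.07610 — 3 statements merged into one kernel-verified Lean document; each statement's English description precedes it below -/
import Mathlib

section
/- For the measure μ = Σ_{n∈ℕ} 2^{n-1}·(δ_{n+2^{-n}} − δ_{n−2^{-n}}) on ℝ, its total variation measure |μ| has |μ|(B(0,R)) growing exponentially in R, so |μ| does not have polynomial growth and hence |μ| is not a tempered distribution. -/
open MeasureTheory Metric Filter Topology SchwartzMap
open scoped ENNReal

noncomputable section

namespace DipoleAux

open Polynomial
lemma iteratedDeriv_zero_fun' (n : ℕ) : iteratedDeriv n (fun _ : ℝ => (0:ℝ)) = fun _ => 0 := by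
  induction n with
  | zero => funext x; simp
  | succ n ih => rw [iteratedDeriv_succ, ih]; funext x; simp

/-- bounded iterated derivatives of smoothTransition -/

lemma sigma_bound (n : ℕ) :
    ∃ M : ℝ, ∀ x : ℝ, ‖iteratedFDeriv ℝ n Real.smoothTransition x‖ ≤ M := by
  cases n with
  | zero =>
    refine ⟨1, fun x => ?_⟩
    rw [norm_iteratedFDeriv_zero, Real.norm_eq_abs, abs_le]
    exact ⟨by linarith [Real.smoothTransition.nonneg x], Real.smoothTransition.le_one x⟩
  | succ n =>
    have hcont : Continuous (iteratedFDeriv ℝ (n+1) Real.smoothTransition) :=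
      (Real.smoothTransition.contDiff (n := (⊤:ℕ∞))).continuous_iteratedFDeriv
        (by exact_mod_cast le_top)
    obtain ⟨C, hC⟩ := isCompact_Icc.exists_bound_of_continuousOn
      (s := Set.Icc (0:ℝ) 1) hcont.continuousOn
    refine ⟨max C 0, fun x => ?_⟩
    by_cases hx : x ∈ Set.Icc (0:ℝ) 1
    · exact (hC x hx).trans (le_max_left _ _)
    · rw [Set.mem_Icc, not_and_or] at hx
      have key : ∀ c : ℝ, (Real.smoothTransition =ᶠ[𝓝 x] fun _ => c) →
          ‖iteratedFDeriv ℝ (n+1) Real.smoothTransition x‖ ≤ max C 0 := by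
        intro c h
        rw [norm_iteratedFDeriv_eq_norm_iteratedDeriv, h.iteratedDeriv_eq (n+1),
          iteratedDeriv_succ', deriv_const', iteratedDeriv_zero_fun']
        simp [le_max_right]
      rcases hx with hx | hx
      · push_neg at hx
        refine key 0 ?_
        filter_upwards [Iio_mem_nhds hx] with y hy
        exact Real.smoothTransition.zero_of_nonpos hy.le
      · push_neg at hx
        refine key 1 ?_
        filter_upwards [Ioi_mem_nhds hx] with y hy
        exact Real.smoothTransition.one_of_one_le hy.le

lemma sigma_bound_unif (n : ℕ) : ∃ M : ℝ, 0 ≤ M ∧ ∀ i ≤ n, ∀ x : ℝ,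
    ‖iteratedFDeriv ℝ i Real.smoothTransition x‖ ≤ M := by
  induction n with
  | zero =>
    obtain ⟨M, hM⟩ := sigma_bound 0
    refine ⟨max M 0, le_max_right _ _, fun i hi x => ?_⟩
    interval_cases i
    exact (hM x).trans (le_max_left _ _)
  | succ n ih =>
    obtain ⟨M, hM0, hM⟩ := ih
    obtain ⟨M', hM'⟩ := sigma_bound (n+1)
    refine ⟨max M M', le_trans hM0 (le_max_left _ _), fun i hi x => ?_⟩
    rcases Nat.lt_succ_iff_lt_or_eq.mp (Nat.lt_succ_of_le hi) with h | rfl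
    · exact (hM i (Nat.lt_succ_iff.mp h) x).trans (le_max_left _ _)
    · exact (hM' x).trans (le_max_right _ _)

lemma exp_iteratedDeriv (n : ℕ) : iteratedDeriv n (fun x : ℝ => Real.exp (-(x/2))) =
    fun x => (-(1/2:ℝ))^n * Real.exp (-(x/2)) := by
  induction n with
  | zero => funext x; simp
  | succ n ih =>
    rw [iteratedDeriv_succ, ih]
    funext x
    have h : HasDerivAt (fun x : ℝ => Real.exp (-(x/2))) (Real.exp (-(x/2)) * (-(1/2))) x :=
      (((hasDerivAt_id x).div_const 2).neg).exp
    rw [deriv_const_mul _ h.differentiableAt, h.deriv]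
    ring

lemma exp_contDiff : ContDiff ℝ ((⊤:ℕ∞) : WithTop ℕ∞) (fun x : ℝ => Real.exp (-(x/2))) :=
  (((contDiff_id.div_const 2).neg).exp)

lemma psi_contDiff : ContDiff ℝ ((⊤:ℕ∞) : WithTop ℕ∞) (fun x : ℝ => Real.smoothTransition x * Real.exp (-(x/2))) :=
  ((Real.smoothTransition.contDiff (n := (⊤:ℕ∞))).of_le (by exact_mod_cast le_top)).mul exp_contDiff

lemma pow_le_exp_half (k : ℕ) {x : ℝ} (hx : 0 ≤ x) :
    x ^ k ≤ (k.factorial : ℝ) * 2 ^ k * Real.exp (x/2) := by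
  have h1 : (x/2) ^ k / (k.factorial : ℝ) ≤ Real.exp (x/2) := by
    refine le_trans ?_ (Real.sum_le_exp_of_nonneg (by positivity) (k+1))
    refine Finset.single_le_sum (f := fun i => (x/2)^i / (i.factorial : ℝ)) ?_
      (Finset.self_mem_range_succ k)
    intro i _
    positivity
  have hk : (0:ℝ) < (k.factorial : ℝ) := by positivity
  rw [div_le_iff₀ hk, div_pow] at h1
  have h2 : x ^ k / 2 ^ k ≤ Real.exp (x/2) * (k.factorial:ℝ) := h1
  rw [div_le_iff₀ (by positivity : (0:ℝ) < (2:ℝ)^k)] at h2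
  nlinarith [h2]

lemma poly_bound (p : Polynomial ℝ) : ∃ C : ℝ, 0 ≤ C ∧
    ∀ x : ℝ, |p.eval x| ≤ C * (1+|x|)^(p.natDegree) := by
  refine ⟨∑ i ∈ Finset.range (p.natDegree+1), |p.coeff i|, by positivity, fun x => ?_⟩
  rw [Polynomial.eval_eq_sum_range]
  refine (Finset.abs_sum_le_sum_abs _ _).trans ?_
  rw [Finset.sum_mul]
  refine Finset.sum_le_sum fun i hi => ?_
  rw [abs_mul, abs_pow]
  have h1 : |x|^i ≤ (1+|x|)^p.natDegree := by
    calc |x|^i ≤ (1+|x|)^i :=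
          pow_le_pow_left₀ (abs_nonneg x) (by linarith [abs_nonneg x]) i
      _ ≤ (1+|x|)^p.natDegree :=
          pow_le_pow_right₀ (by linarith [abs_nonneg x])
            (Nat.lt_succ_iff.mp (Finset.mem_range.mp hi))
  exact mul_le_mul_of_nonneg_left h1 (abs_nonneg _)

lemma g_iterated (n : ℕ) : ∃ p : Polynomial ℝ,
    iteratedDeriv n (fun x : ℝ => Real.sqrt (1+x^2)) =
      fun x => p.eval x * (1+x^2) ^ ((1:ℝ)/2 - n) := by
  induction n with
  | zero =>
    refine ⟨1, ?_⟩
    funext x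
    rw [iteratedDeriv_zero]
    have h : (0:ℝ) ≤ 1 + x^2 := by positivity
    simp [Real.sqrt_eq_rpow, h]
  | succ n ih =>
    obtain ⟨p, hp⟩ := ih
    refine ⟨p.derivative * (X^2 + 1) + C ((1:ℝ) - 2*n) * X * p, ?_⟩
    funext x
    have hpos : (0:ℝ) < 1 + x^2 := by positivity
    have hbase : HasDerivAt (fun x : ℝ => 1 + x^2) (2*x) x := by
      simpa using ((hasDerivAt_pow 2 x).const_add 1)
    have hr : HasDerivAt (fun x : ℝ => (1+x^2) ^ ((1:ℝ)/2 - n))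
        (2*x * ((1:ℝ)/2 - n) * (1+x^2) ^ (((1:ℝ)/2 - n) - 1)) x :=
      hbase.rpow_const (Or.inl hpos.ne')
    have htot := ((p.hasDerivAt x).mul hr)
    rw [iteratedDeriv_succ, hp]
    rw [show (fun x => eval x p * (1 + x ^ 2) ^ ((1:ℝ) / 2 - n)) = ((fun x => eval x p) * fun x => (1 + x ^ 2) ^ ((1:ℝ) / 2 - n)) from rfl, htot.deriv]
    have hsplit : (1+x^2) ^ ((1:ℝ)/2 - n) =
        (1+x^2) ^ ((1:ℝ)/2 - (n+1:ℕ)) * (1+x^2) := by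
      rw [← Real.rpow_add_one hpos.ne']
      congr 1
      push_cast
      ring
    rw [hsplit]
    push_cast
    simp only [Polynomial.eval_add, Polynomial.eval_mul, Polynomial.eval_pow,
      Polynomial.eval_X, Polynomial.eval_C, Polynomial.derivative_mul, Polynomial.eval_one]
    have : (1:ℝ)/2 - (n:ℝ) - 1 = (1:ℝ)/2 - ((n:ℝ)+1) := by ring
    rw [this]
    ring

lemma g_temperate : Function.HasTemperateGrowth (fun x : ℝ => Real.sqrt (1+x^2)) := by
  constructor
  · exact (contDiff_const.add (contDiff_id.pow 2)).sqrt (fun x => by positivity)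
  · intro n
    obtain ⟨p, hp⟩ := g_iterated n
    obtain ⟨Cp, hCp0, hCp⟩ := poly_bound p
    refine ⟨p.natDegree + 1, Cp, fun x => ?_⟩
    rw [norm_iteratedFDeriv_eq_norm_iteratedDeriv, hp]
    have hpos : (0:ℝ) < 1 + x^2 := by positivity
    have h1 : (1+x^2) ^ ((1:ℝ)/2 - n) ≤ 1 + |x| := by
      calc (1+x^2) ^ ((1:ℝ)/2 - n) ≤ (1+x^2) ^ ((1:ℝ)/2) :=
            Real.rpow_le_rpow_of_exponent_le (by nlinarith [sq_nonneg x]) (by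
              have : (0:ℝ) ≤ n := Nat.cast_nonneg n
              linarith)
        _ = Real.sqrt (1+x^2) := (Real.rpow_natCast _ _ ▸ (Real.sqrt_eq_rpow _).symm)
        _ ≤ 1 + |x| := by
            have h2 : (1:ℝ)+x^2 ≤ (1+|x|)^2 := by nlinarith [abs_nonneg x, sq_abs x]
            calc Real.sqrt (1+x^2) ≤ Real.sqrt ((1+|x|)^2) := Real.sqrt_le_sqrt h2
              _ = 1 + |x| := Real.sqrt_sq (by positivity)
    have h2 : ‖p.eval x * (1+x^2) ^ ((1:ℝ)/2 - n)‖ ≤ Cp * (1+|x|)^(p.natDegree) * (1+|x|) := by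
      rw [Real.norm_eq_abs, abs_mul,
        abs_of_nonneg (Real.rpow_nonneg (by positivity : (0:ℝ) ≤ 1+x^2) _)]
      exact mul_le_mul (hCp x) h1 (Real.rpow_nonneg (by positivity) _) (by positivity)
    refine h2.trans ?_
    rw [mul_assoc, ← pow_succ]
    have h3 : (1:ℝ)+|x| = 1+‖x‖ := by rw [Real.norm_eq_abs]
    rw [h3]

lemma exp_half_lt_two : Real.exp (1/2 : ℝ) < 2 := by
  have h1 : Real.exp (1/2:ℝ) ^ 2 = Real.exp 1 := by
    rw [sq, ← Real.exp_add]; norm_num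
  have h2 : Real.exp 1 < 2.7182818286 := Real.exp_one_lt_d9
  have h3 : Real.exp (1/2:ℝ) ^ 2 < 2 ^ 2 := by rw [h1]; nlinarith
  exact lt_of_pow_lt_pow_left₀ 2 (by norm_num) h3

lemma exists_big (k : ℕ) : ∃ n : ℕ, (k:ℝ) ≤ 2^n * Real.exp (-(((n:ℝ)+2)/2)) := by
  have hr : 1 < 2 * Real.exp (-(1/2:ℝ)) := by
    rw [Real.exp_neg, mul_comm, inv_mul_eq_div]
    exact (one_lt_div (Real.exp_pos _)).mpr exp_half_lt_two
  have ht : Tendsto (fun n : ℕ => (2 * Real.exp (-(1/2:ℝ)))^n * Real.exp (-1:ℝ))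
      atTop atTop :=
    Tendsto.atTop_mul_const (Real.exp_pos _) (tendsto_pow_atTop_atTop_of_one_lt hr)
  obtain ⟨n, hn⟩ := (ht.eventually_ge_atTop (k:ℝ)).exists
  refine ⟨n, hn.trans_eq ?_⟩
  have h1 : Real.exp (-(((n:ℝ)+2)/2)) = Real.exp (-(1/2:ℝ))^n * Real.exp (-1:ℝ) := by
    rw [← Real.exp_nat_mul, ← Real.exp_add]
    congr 1
    push_cast
    ring
  rw [h1, mul_pow]
  ring

lemma psi_decay (k n : ℕ) :
    ∃ C : ℝ, ∀ x : ℝ, ‖x‖ ^ k * ‖iteratedFDeriv ℝ n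
      (fun x : ℝ => Real.smoothTransition x * Real.exp (-(x/2))) x‖ ≤ C := by

  obtain ⟨M, hM0, hM⟩ := sigma_bound_unif n
  set D : ℝ := 2 ^ n * M * ((k.factorial : ℝ) * 2 ^ k) with hD
  refine ⟨max D 0, fun x => ?_⟩
  rcases lt_or_ge x 0 with hx | hx
  · have hev : (fun x : ℝ => Real.smoothTransition x * Real.exp (-(x/2))) =ᶠ[𝓝 x]
        fun _ => (0:ℝ) := by
      filter_upwards [Iio_mem_nhds hx] with y hy
      rw [Real.smoothTransition.zero_of_nonpos hy.le, zero_mul]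
    rw [norm_iteratedFDeriv_eq_norm_iteratedDeriv, hev.iteratedDeriv_eq n,
      iteratedDeriv_zero_fun']
    simp [le_max_right]
  · have hmul := norm_iteratedFDeriv_mul_le (𝕜 := ℝ)
      ((Real.smoothTransition.contDiff (n := (⊤:ℕ∞)))) (exp_contDiff) x (n := n)
      (by exact_mod_cast le_top)
    have hterm : ∀ i ∈ Finset.range (n+1),
        (n.choose i : ℝ) * ‖iteratedFDeriv ℝ i Real.smoothTransition x‖ *
          ‖iteratedFDeriv ℝ (n-i) (fun x : ℝ => Real.exp (-(x/2))) x‖ ≤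
        (n.choose i : ℝ) * M * Real.exp (-(x/2)) := by
      intro i hi
      have h1 : ‖iteratedFDeriv ℝ (n-i) (fun x : ℝ => Real.exp (-(x/2))) x‖ ≤
          Real.exp (-(x/2)) := by
        rw [norm_iteratedFDeriv_eq_norm_iteratedDeriv, exp_iteratedDeriv (n-i)]
        rw [Real.norm_eq_abs, abs_mul, abs_pow, abs_neg, abs_of_pos (Real.exp_pos _)]
        have : |(1/2:ℝ)| ^ (n-i) ≤ 1 := by
          rw [abs_of_pos (by norm_num : (0:ℝ) < 1/2)]
          exact pow_le_one₀ (by norm_num) (by norm_num)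
        nlinarith [Real.exp_pos (-(x/2))]
      refine mul_le_mul ?_ h1 (norm_nonneg _) (by positivity)
      exact mul_le_mul_of_nonneg_left
        (hM i (Nat.lt_succ_iff.mp (Finset.mem_range.mp hi)) x) (by positivity)
    have hsum : ‖iteratedFDeriv ℝ n
        (fun x : ℝ => Real.smoothTransition x * Real.exp (-(x/2))) x‖ ≤
        2 ^ n * M * Real.exp (-(x/2)) := by
      refine hmul.trans ((Finset.sum_le_sum hterm).trans ?_)
      rw [← Finset.sum_mul, ← Finset.sum_mul]
      have h2 : ∑ i ∈ Finset.range (n+1), (n.choose i : ℝ) = 2 ^ n := by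
        exact_mod_cast congrArg (Nat.cast (R := ℝ)) (Nat.sum_range_choose n)
      rw [h2]
    calc ‖x‖ ^ k * ‖iteratedFDeriv ℝ n
          (fun x : ℝ => Real.smoothTransition x * Real.exp (-(x/2))) x‖
        ≤ x ^ k * (2 ^ n * M * Real.exp (-(x/2))) := by
          rw [Real.norm_eq_abs, abs_of_nonneg hx]
          exact mul_le_mul_of_nonneg_left hsum (by positivity)
      _ ≤ ((k.factorial : ℝ) * 2 ^ k * Real.exp (x/2)) * (2 ^ n * M * Real.exp (-(x/2))) := by
          refine mul_le_mul_of_nonneg_right (pow_le_exp_half k hx) ?_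
          positivity
      _ = D * (Real.exp (x/2) * Real.exp (-(x/2))) := by rw [hD]; ring
      _ = D := by rw [← Real.exp_add]; simp
      _ ≤ max D 0 := le_max_left _ _

def psi : 𝓢(ℝ, ℝ) where
  toFun := fun x => Real.smoothTransition x * Real.exp (-(x/2))
  smooth' := psi_contDiff
  decay' := psi_decay

def phi : 𝓢(ℝ, ℝ) :=
  SchwartzMap.compCLM (𝕜 := ℝ) g_temperate
    ⟨1, 1, fun x => by
      have h1 : ‖x‖ ≤ Real.sqrt (1 + x^2) := by
        rw [Real.norm_eq_abs, ← Real.sqrt_sq_eq_abs]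
        exact Real.sqrt_le_sqrt (by nlinarith)
      have h2 : Real.sqrt (1 + x^2) = ‖Real.sqrt (1+x^2)‖ := by
        rw [Real.norm_eq_abs, abs_of_nonneg (Real.sqrt_nonneg _)]
      rw [pow_one, one_mul]
      rw [h2] at h1
      linarith [h1]⟩ psi

lemma phi_apply (x : ℝ) : phi x = Real.exp (-(Real.sqrt (1+x^2)/2)) := by
  have h1 : (1:ℝ) ≤ Real.sqrt (1 + x^2) := by
    nlinarith [Real.sq_sqrt (show (0:ℝ) ≤ 1+x^2 by positivity),
      Real.sqrt_nonneg (1+x^2)]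
  show psi (Real.sqrt (1+x^2)) = _
  show Real.smoothTransition _ * Real.exp _ = _
  rw [Real.smoothTransition.one_of_one_le h1, one_mul]

lemma phi_not_integrable :
    ¬ Integrable (fun x => phi x)
      (Measure.sum (fun n : ℕ => ((2 : ℝ≥0∞) ^ n) •
        (Measure.dirac ((n + 1 : ℝ) + (2 : ℝ) ^ (-(n + 1 : ℤ))) +
         Measure.dirac ((n + 1 : ℝ) - (2 : ℝ) ^ (-(n + 1 : ℤ)))))) := by
  intro hint
  have hfin := hint.hasFiniteIntegral
  rw [HasFiniteIntegral] at hfin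
  rw [lintegral_sum_measure] at hfin
  set F : ℝ → ℝ≥0∞ := fun x => ‖phi x‖ₑ with hF
  have hterm : ∀ n : ℕ, ∫⁻ x, F x ∂(((2 : ℝ≥0∞) ^ n) •
      (Measure.dirac ((n + 1 : ℝ) + (2 : ℝ) ^ (-(n + 1 : ℤ))) +
       Measure.dirac ((n + 1 : ℝ) - (2 : ℝ) ^ (-(n + 1 : ℤ))))) =
      2 ^ n * (F ((n + 1 : ℝ) + (2 : ℝ) ^ (-(n + 1 : ℤ))) +
        F ((n + 1 : ℝ) - (2 : ℝ) ^ (-(n + 1 : ℤ)))) := by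
    intro n
    rw [lintegral_smul_measure, lintegral_add_measure, lintegral_dirac, lintegral_dirac, smul_eq_mul]
  simp only [hterm] at hfin
  obtain ⟨k, hk⟩ := ENNReal.exists_nat_gt hfin.ne
  obtain ⟨n, hn⟩ := exists_big k
  set b : ℝ := (n + 1 : ℝ) - (2 : ℝ) ^ (-(n + 1 : ℤ)) with hb
  have hble : Real.sqrt (1 + b^2) ≤ (n:ℝ) + 2 := by
    have h1 : (0:ℝ) < (2:ℝ)^(-(n+1:ℤ)) := by positivity
    have h2 : (2:ℝ)^(-(n+1:ℤ)) ≤ 1 := by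
      rw [zpow_neg]
      exact inv_le_one_of_one_le₀ (one_le_zpow₀ (by norm_num) (by positivity))
    have hb0 : 0 ≤ b := by rw [hb]; nlinarith [Nat.cast_nonneg (α := ℝ) n]
    have hble' : b ≤ (n:ℝ)+1 := by rw [hb]; nlinarith
    have : 1 + b^2 ≤ ((n:ℝ)+2)^2 := by nlinarith [Nat.cast_nonneg (α := ℝ) n]
    calc Real.sqrt (1+b^2) ≤ Real.sqrt (((n:ℝ)+2)^2) := Real.sqrt_le_sqrt this
      _ = (n:ℝ)+2 := Real.sqrt_sq (by positivity)
  have phi_applyb : Real.exp (-(((n:ℝ)+2)/2)) ≤ phi b := by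
    rw [phi_apply b]
    exact Real.exp_le_exp.mpr (by linarith)
  have hlow : (k : ℝ≥0∞) ≤ 2 ^ n * (F ((n + 1 : ℝ) + (2 : ℝ) ^ (-(n + 1 : ℤ))) + F b) := by
    have h1 : (ENNReal.ofReal (Real.exp (-(((n:ℝ)+2)/2)))) ≤ F b := by
      have hb0 : 0 ≤ phi b := by rw [phi_apply b]; positivity
      have : F b = ENNReal.ofReal (phi b) := by
        rw [hF]
        exact Real.enorm_eq_ofReal hb0
      rw [this]
      exact ENNReal.ofReal_le_ofReal phi_applyb
    calc (k : ℝ≥0∞) = ENNReal.ofReal (k:ℝ) := by simp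
      _ ≤ ENNReal.ofReal (2^n * Real.exp (-(((n:ℝ)+2)/2))) := ENNReal.ofReal_le_ofReal hn
      _ = ENNReal.ofReal ((2:ℝ)^n) * ENNReal.ofReal (Real.exp (-(((n:ℝ)+2)/2))) :=
          ENNReal.ofReal_mul (by positivity)
      _ = 2^n * ENNReal.ofReal (Real.exp (-(((n:ℝ)+2)/2))) := by
          rw [ENNReal.ofReal_pow (by norm_num), ENNReal.ofReal_ofNat]
      _ ≤ 2^n * F b := by gcongr
      _ ≤ _ := by
          gcongr
          exact le_add_self
  have := hlow.trans (ENNReal.le_tsum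
    (f := fun i : ℕ => 2 ^ i * (F ((i + 1 : ℝ) + (2 : ℝ) ^ (-(i + 1 : ℤ))) +
      F ((i + 1 : ℝ) - (2 : ℝ) ^ (-(i + 1 : ℤ))))) n)
  exact absurd (this.trans_lt hk) (lt_irrefl _)

end DipoleAux

/-- The total variation `|μ| = Σ_{n≥1} 2^{n-1}(δ_{n+2^{-n}} + δ_{n−2^{-n}})` of the measure of
Remark 3 grows exponentially: `|μ|(B(0,n+2)) ≥ 2^n`; hence it does not have polynomial growth
and does not define a tempered distribution. -/
theorem dipole_total_variation_not_tempered :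
    (∀ n : ℕ, (2 : ℝ≥0∞) ^ n ≤
      (Measure.sum (fun n : ℕ => ((2 : ℝ≥0∞) ^ n) •
        (Measure.dirac ((n + 1 : ℝ) + (2 : ℝ) ^ (-(n + 1 : ℤ))) +
         Measure.dirac ((n + 1 : ℝ) - (2 : ℝ) ^ (-(n + 1 : ℤ))))))
        (Metric.ball (0 : ℝ) ((n : ℝ) + 2))) ∧
    ¬ (∃ (C : ℝ) (N : ℕ), ∀ R : ℝ, 0 < R →
        (Measure.sum (fun n : ℕ => ((2 : ℝ≥0∞) ^ n) •
          (Measure.dirac ((n + 1 : ℝ) + (2 : ℝ) ^ (-(n + 1 : ℤ))) +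
           Measure.dirac ((n + 1 : ℝ) - (2 : ℝ) ^ (-(n + 1 : ℤ))))))
          (Metric.ball (0 : ℝ) R) ≤ ENNReal.ofReal (C * max 1 (R ^ N))) ∧
    ¬ (∀ φ : 𝓢(ℝ, ℝ), Integrable (fun x => φ x)
        (Measure.sum (fun n : ℕ => ((2 : ℝ≥0∞) ^ n) •
          (Measure.dirac ((n + 1 : ℝ) + (2 : ℝ) ^ (-(n + 1 : ℤ))) +
           Measure.dirac ((n + 1 : ℝ) - (2 : ℝ) ^ (-(n + 1 : ℤ)))))))  := by
  have part1 : ∀ n : ℕ, (2 : ℝ≥0∞) ^ n ≤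
      (Measure.sum (fun n : ℕ => ((2 : ℝ≥0∞) ^ n) •
        (Measure.dirac ((n + 1 : ℝ) + (2 : ℝ) ^ (-(n + 1 : ℤ))) +
         Measure.dirac ((n + 1 : ℝ) - (2 : ℝ) ^ (-(n + 1 : ℤ))))))
        (Metric.ball (0 : ℝ) ((n : ℝ) + 2)) := by
    intro n
    rw [Measure.sum_apply _ measurableSet_ball]
    refine le_trans ?_ (ENNReal.le_tsum n)
    rw [Measure.smul_apply, Measure.add_apply, smul_eq_mul]
    have h1 : (0:ℝ) < (2:ℝ)^(-(n+1:ℤ)) := by positivity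
    have h2 : (2:ℝ)^(-(n+1:ℤ)) ≤ 1 := by
      rw [zpow_neg]
      refine inv_le_one_of_one_le₀ (one_le_zpow₀ (by norm_num) (by positivity))
    have hb : ((n+1:ℝ) - 2^(-(n+1:ℤ))) ∈ ball (0:ℝ) ((n:ℝ)+2) := by
      rw [mem_ball, Real.dist_eq, sub_zero, abs_lt]
      constructor <;> nlinarith [Nat.cast_nonneg (α := ℝ) n]
    rw [Measure.dirac_apply_of_mem hb]
    calc (2:ℝ≥0∞)^n = 2^n * 1 := by ring
    _ ≤ _ := by gcongr; exact le_add_self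
  refine ⟨part1, ?_, ?_⟩
  · rintro ⟨C, N, hC⟩
    have h0 : Tendsto (fun n : ℕ => C * (((n:ℝ)+2) ^ N * (1/2:ℝ) ^ n)) atTop (𝓝 (C * 0)) := by
      refine Tendsto.const_mul C ?_
      have := tendsto_pow_const_mul_const_pow_of_lt_one (r := (1/2:ℝ)) N (by norm_num) (by norm_num)
      have key : Tendsto (fun n : ℕ => ((n+2:ℕ):ℝ) ^ N * (1/2:ℝ) ^ (n+2)) atTop (𝓝 0) :=
        this.comp (tendsto_add_atTop_nat 2)
      have h4 : Tendsto (fun n : ℕ => (((n+2:ℕ):ℝ) ^ N * (1/2:ℝ) ^ (n+2)) * 4) atTop (𝓝 (0*4)) :=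
        key.mul_const 4
      rw [zero_mul] at h4
      refine h4.congr fun n => ?_
      push_cast
      ring
    rw [mul_zero] at h0
    have hev : ∀ᶠ n : ℕ in atTop, C * (((n:ℝ)+2) ^ N * (1/2:ℝ) ^ n) < 1 :=
      h0.eventually (eventually_lt_nhds zero_lt_one)
    obtain ⟨n, hn⟩ := hev.exists
    have hR : (0:ℝ) < (n:ℝ) + 2 := by positivity
    have hle := (part1 n).trans (hC ((n:ℝ)+2) hR)
    have hmax : max 1 (((n:ℝ)+2) ^ N) = ((n:ℝ)+2) ^ N := by
      rw [max_eq_right]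
      exact one_le_pow₀ (by linarith)
    rw [hmax] at hle
    have hlt : C * ((n:ℝ)+2) ^ N < 2 ^ n := by
      have hp : (0:ℝ) < (2:ℝ) ^ n := by positivity
      have h12 : ((1:ℝ)/2) ^ n = ((2:ℝ)^n)⁻¹ := by
        rw [one_div, inv_pow]
      rw [h12] at hn
      have := (mul_inv_lt_iff₀ hp).mp (by linarith [hn] : C * ((n:ℝ)+2) ^ N * ((2:ℝ)^n)⁻¹ < 1)
      linarith
    have h2n : ((2:ℝ≥0∞)^n : ℝ≥0∞) = ENNReal.ofReal ((2:ℝ)^n) := by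
      rw [ENNReal.ofReal_pow (by norm_num), ENNReal.ofReal_ofNat]
    rw [h2n] at hle
    have hCpos : 0 ≤ C * ((n:ℝ)+2) ^ N ∨ C * ((n:ℝ)+2) ^ N < 0 := le_or_gt _ _
    rcases hCpos with h | h
    · have := (ENNReal.ofReal_le_ofReal_iff (by positivity)).mp hle
      linarith
    · rw [ENNReal.ofReal_eq_zero.mpr h.le] at hle
      exact absurd hle (by simp)
  · intro h
    exact DipoleAux.phi_not_integrable (h DipoleAux.phi)

end
end

section
/- Let f be a tempered distribution on ℝ^d whose Fourier transform is an atomic measure f̂ = Σ_n b_n δ_{s_n} with Σ_n |b_n|·|ψ(s_n)| < ∞ for every Schwartz function ψ (equivalently |f̂| = Σ|b_n|δ_{s_n} is a tempered measure). Then for every Schwartz function φ, the function t ↦ f(φ(·−t)) equals Σ_n b_n·φ̌(s_n)·e^{2πi⟨t,s_n⟩}, where φ̌ is the inverse Fourier transform of φ, and this function is Bohr almost periodic on ℝ^d. -/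
/-! The inverse Fourier transform turns translation by `t` into multiplication by the character
`𝐞 ⟪t, ·⟫`, so pairing `f` with `φ(· - t)` gives the absolutely convergent exponential series
`∑ bₙ φ̌(sₙ) 𝐞 ⟪t, sₙ⟫`. Such a series is Bohr almost periodic: once its tail is below `ε / 4`,
it suffices to find common almost periods of the finitely many remaining characters. These are
relatively dense because `τ ↦ (𝐞 ⟪τ, sₙ⟫)_{n < N}` takes values in a compact torus, so finitely
many of its values are `δ`-dense among all of them. -/

open MeasureTheory Metric Filter Topology SchwartzMap
open scoped FourierTransform RealInnerProductSpace

noncomputable section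

abbrev Ed (d : ℕ) := EuclideanSpace ℝ (Fin d)

/-- A set is relatively dense if some radius `R` works: every ball of radius `R` meets it. -/
def IsRelativelyDense {d : ℕ} (A : Set (Ed d)) : Prop :=
  ∃ R : ℝ, ∀ x : Ed d, (Metric.ball x R ∩ A).Nonempty

/-- The set of ε-almost periods of a function. -/
def almostPeriods {d : ℕ} {F : Type*} [NormedAddCommGroup F] (f : Ed d → F) (ε : ℝ) :
    Set (Ed d) :=
  {τ | ∀ t : Ed d, ‖f (t + τ) - f t‖ < ε}

/-- Bohr almost periodic function on `ℝ^d`. -/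
def IsBohrAP {d : ℕ} {F : Type*} [NormedAddCommGroup F] (f : Ed d → F) : Prop :=
  Continuous f ∧ ∀ ε > (0 : ℝ), IsRelativelyDense (almostPeriods f ε)

lemma hasTemperateGrowth_sub_const {d : ℕ} (t : EuclideanSpace ℝ (Fin d)) :
    Function.HasTemperateGrowth (fun x : EuclideanSpace ℝ (Fin d) => x - t) := by
  apply Function.HasTemperateGrowth.of_fderiv (k := 1) (C := 1 + ‖t‖)
  · have h : (fderiv ℝ (fun x : EuclideanSpace ℝ (Fin d) => x - t))
        = fun _ => ContinuousLinearMap.id ℝ (EuclideanSpace ℝ (Fin d)) := by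
      funext x
      rw [fderiv_sub_const]
      simp [fderiv_id']
    rw [h]
    exact Function.HasTemperateGrowth.const _
  · exact differentiable_id.sub_const t
  · intro x
    have : ‖x - t‖ ≤ ‖x‖ + ‖t‖ := norm_sub_le x t
    nlinarith [norm_nonneg x, norm_nonneg t]

/-- Translation `φ ↦ φ(· − t)` as a continuous linear map on the Schwartz space. -/
def translateS {d : ℕ} (t : EuclideanSpace ℝ (Fin d)) :
    𝓢(EuclideanSpace ℝ (Fin d), ℂ) →L[ℂ] 𝓢(EuclideanSpace ℝ (Fin d), ℂ) :=
  SchwartzMap.compCLMOfAntilipschitz ℂ (hasTemperateGrowth_sub_const t)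
    ((Isometry.of_dist_eq (fun a b => dist_sub_right a b t)).antilipschitz)

theorem Circle.dist_div_one (a b : Circle) : dist (a / b) 1 = dist a b := by
  change dist ((a / b : Circle) : ℂ) ((1 : Circle) : ℂ) = dist (a : ℂ) b
  rw [dist_eq_norm, dist_eq_norm, Circle.coe_div, Circle.coe_one,
    ← div_self (Circle.coe_ne_zero b), ← sub_div, norm_div, Circle.norm_coe, div_one]

theorem Circle.dist_le_two (a b : Circle) : dist a b ≤ 2 := by
  change dist (a : ℂ) b ≤ 2
  calc dist (a : ℂ) b ≤ ‖(a : ℂ)‖ + ‖(b : ℂ)‖ := dist_le_norm_add_norm _ _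
    _ = 2 := by rw [Circle.norm_coe, Circle.norm_coe]; norm_num

theorem isRelativelyDense_of_totallyBounded_range {d : ℕ} {X : Type*} [PseudoMetricSpace X]
    {g : Ed d → X} (hg : TotallyBounded (Set.range g))
    (hsub : ∀ x y, dist (g (x - y)) (g 0) ≤ dist (g x) (g y)) {δ : ℝ} (hδ : 0 < δ) :
    IsRelativelyDense {τ | dist (g τ) (g 0) < δ} := by
  obtain ⟨C, hCrange, hCfin, hcover⟩ := finite_approx_of_totallyBounded hg δ hδ
  choose! σ hσ using fun y (hy : y ∈ C) => hCrange hy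
  refine ⟨1 + ∑ y ∈ hCfin.toFinset, ‖σ y‖, fun x => ?_⟩
  obtain ⟨y, hyC, hxy⟩ := Set.mem_iUnion₂.1 (hcover (Set.mem_range_self x))
  refine ⟨x - σ y, ?_, (hsub x (σ y)).trans_lt ?_⟩
  · rw [mem_ball, dist_eq_norm, sub_sub_cancel_left, norm_neg]
    have := Finset.single_le_sum (fun y _ => norm_nonneg (σ y)) (hCfin.mem_toFinset.2 hyC)
    linarith
  · rwa [hσ y hyC]

theorem isRelativelyDense_setOf_forall_dist_addChar_one_lt {d : ℕ} {ι : Type*} [Fintype ι]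
    (χ : ι → AddChar (Ed d) Circle) {δ : ℝ} (hδ : 0 < δ) :
    IsRelativelyDense {τ | ∀ i, dist (χ i τ) 1 < δ} := by
  have hsub : ∀ x y, dist (fun i => χ i (x - y)) (fun i => χ i 0) ≤
      dist (fun i => χ i x) (fun i => χ i y) := by
    refine fun x y => (dist_pi_le_iff dist_nonneg).2 fun i => ?_
    rw [AddChar.map_zero_eq_one, AddChar.map_sub_eq_div, Circle.dist_div_one]
    exact dist_le_pi_dist (fun i => χ i x) (fun i => χ i y) i
  simpa only [AddChar.map_zero_eq_one, dist_pi_lt_iff hδ] using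
    isRelativelyDense_of_totallyBounded_range (g := fun τ i => χ i τ)
      (isCompact_univ.totallyBounded.subset (Set.subset_univ _)) hsub hδ

theorem tsum_mul_le_of_forall_lt_le {a u : ℕ → ℝ} {M δ : ℝ} {N : ℕ} (ha : Summable a)
    (ha0 : ∀ n, 0 ≤ a n) (hu0 : ∀ n, 0 ≤ u n) (huM : ∀ n, u n ≤ M) (huδ : ∀ n < N, u n ≤ δ)
    (hδ : 0 ≤ δ) :
    ∑' n, a n * u n ≤ δ * ∑' n, a n + M * ∑' n, a (n + N) := by
  have hau : Summable fun n => a n * u n :=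
    (ha.mul_right M).of_nonneg_of_le (fun n => mul_nonneg (ha0 n) (hu0 n))
      fun n => mul_le_mul_of_nonneg_left (huM n) (ha0 n)
  rw [← hau.sum_add_tsum_nat_add N]
  gcongr
  · calc ∑ n ∈ Finset.range N, a n * u n ≤ ∑ n ∈ Finset.range N, δ * a n :=
          Finset.sum_le_sum fun n hn => by
            rw [mul_comm δ]
            exact mul_le_mul_of_nonneg_left (huδ n (Finset.mem_range.1 hn)) (ha0 n)
      _ ≤ δ * ∑' n, a n := by
          rw [← Finset.mul_sum]
          exact mul_le_mul_of_nonneg_left (ha.sum_le_tsum _ fun n _ => ha0 n) hδ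
  · rw [← tsum_mul_left]
    refine ((summable_nat_add_iff N).2 hau).tsum_le_tsum (fun n => ?_)
      ((summable_nat_add_iff N).2 ha |>.mul_left M)
    rw [mul_comm M]
    exact mul_le_mul_of_nonneg_left (huM _) (ha0 _)

section AddChar

variable {A : Type*} [AddMonoid A] (c : ℕ → ℂ) (χ : ℕ → AddChar A Circle)

theorem summable_mul_addChar (hc : Summable fun n => ‖c n‖) (t : A) :
    Summable fun n => c n * (χ n t : ℂ) :=
  Summable.of_norm <| by simpa only [norm_mul, Circle.norm_coe, mul_one] using hc

theorem norm_tsum_mul_addChar_add_sub_le (hc : Summable fun n => ‖c n‖) (t τ : A) :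
    ‖∑' n, c n * (χ n (t + τ) : ℂ) - ∑' n, c n * (χ n t : ℂ)‖ ≤
      ∑' n, ‖c n‖ * dist (χ n τ) 1 := by
  rw [← (summable_mul_addChar c χ hc _).tsum_sub (summable_mul_addChar c χ hc _)]
  refine tsum_of_norm_bounded (Summable.hasSum ?_) fun n => le_of_eq ?_
  · exact (hc.mul_right 2).of_nonneg_of_le (fun n => by positivity)
      fun n => mul_le_mul_of_nonneg_left (Circle.dist_le_two _ _) (norm_nonneg _)
  · change _ = ‖c n‖ * dist ((χ n τ : Circle) : ℂ) ((1 : Circle) : ℂ)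
    rw [AddChar.map_add_eq_mul, Circle.coe_mul, Circle.coe_one, dist_eq_norm, ← mul_sub,
      ← mul_sub_one, norm_mul, norm_mul, Circle.norm_coe, one_mul]

end AddChar

theorem isBohrAP_tsum_mul_addChar {d : ℕ} (c : ℕ → ℂ) (χ : ℕ → AddChar (Ed d) Circle)
    (hχ : ∀ n, Continuous (χ n)) (hc : Summable fun n => ‖c n‖) :
    IsBohrAP fun t => ∑' n, c n * (χ n t : ℂ) := by
  refine ⟨continuous_tsum (fun n => continuous_const.mul (continuous_subtype_val.comp (hχ n)))
    hc fun n t => by rw [norm_mul, Circle.norm_coe, mul_one], fun ε hε => ?_⟩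
  obtain ⟨N, hN⟩ : ∃ N : ℕ, ∑' n, ‖c (n + N)‖ < ε / 4 :=
    ((tendsto_sum_nat_add fun n => ‖c n‖).eventually (gt_mem_nhds (by positivity))).exists
  set C := ∑' n, ‖c n‖
  have hC : 0 ≤ C := tsum_nonneg fun n => norm_nonneg _
  set δ := ε / (2 * (C + 1))
  have hδ : 0 < δ := by positivity
  have hδC : δ * C < ε / 2 := by
    rw [div_mul_eq_mul_div, div_lt_div_iff₀ (by positivity) two_pos]
    nlinarith
  obtain ⟨R, hR⟩ := isRelativelyDense_setOf_forall_dist_addChar_one_lt (fun i : Fin N => χ i) hδ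
  refine ⟨R, fun x => (hR x).mono (Set.inter_subset_inter_right _ fun τ hτ t => ?_)⟩
  calc _ ≤ ∑' n, ‖c n‖ * dist (χ n τ) 1 := norm_tsum_mul_addChar_add_sub_le c χ hc t τ
    _ ≤ δ * C + 2 * ∑' n, ‖c (n + N)‖ :=
        tsum_mul_le_of_forall_lt_le hc (fun n => norm_nonneg _) (fun n => dist_nonneg)
          (fun n => Circle.dist_le_two _ _) (fun n hn => (hτ ⟨n, hn⟩).le) hδ.le
    _ < ε := by linarith

theorem coe_fourierChar_eq_exp (x : ℝ) :
    (𝐞 x : ℂ) = Complex.exp (2 * Real.pi * Complex.I * x) := by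
  rw [Real.fourierChar_apply]
  push_cast
  ring_nf

section Fourier

variable {V : Type*} [NormedAddCommGroup V] [InnerProductSpace ℝ V]

def fourierCharInner (ξ : V) : AddChar V Circle :=
  𝐞.compAddMonoidHom ((innerₗ V).flip ξ).toAddMonoidHom

@[simp]
theorem fourierCharInner_apply (ξ t : V) : fourierCharInner ξ t = 𝐞 ⟪t, ξ⟫ := rfl

theorem continuous_fourierCharInner (ξ : V) : Continuous (fourierCharInner ξ) :=
  Real.continuous_fourierChar.comp (continuous_id.inner continuous_const)

variable [FiniteDimensional ℝ V] [MeasurableSpace V] [BorelSpace V]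

theorem apply_eq_tsum_fourierInv {f : 𝓢(V, ℂ) →L[ℂ] ℂ} {b : ℕ → ℂ} {s : ℕ → V}
    (hFT : ∀ φ : 𝓢(V, ℂ), f (fourierTransformCLM ℂ φ) = ∑' n, b n * φ (s n))
    (ψ : 𝓢(V, ℂ)) : f ψ = ∑' n, b n * 𝓕⁻ ψ (s n) := by
  simpa only [fourierTransformCLM_apply, FourierInvPair.fourier_fourierInv_eq] using hFT (𝓕⁻ ψ)

end Fourier

theorem fourierInv_translateS_apply {d : ℕ} (t : Ed d) (φ : 𝓢(Ed d, ℂ)) (ξ : Ed d) :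
    𝓕⁻ (translateS t φ) ξ = 𝐞 ⟪t, ξ⟫ * 𝓕⁻ φ ξ := by
  rw [fourierInv_coe, fourierInv_coe, translateS, compCLMOfAntilipschitz_apply]
  simp_rw [sub_eq_add_neg]
  -- `𝓕⁻` on functions is the vector Fourier integral for the pairing `-⟪·, ·⟫`
  change VectorFourier.fourierIntegral 𝐞 volume (-innerₗ (Ed d)) (φ ∘ fun x => x + -t) ξ = _
  rw [VectorFourier.fourierIntegral_comp_add_right]
  simp only [LinearMap.neg_apply, map_neg, neg_neg, innerₗ_apply_apply]
  rfl

/-- Lemma 2 of the paper: if `f` is a tempered distribution whose Fourier transform is the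
atomic measure `Σ b_n δ_{s_n}` with `Σ |b_n||ψ(s_n)| < ∞` for every Schwartz `ψ`, then for
every Schwartz `φ` the function `t ↦ f(φ(·−t))` equals the exponential sum
`Σ b_n φ̌(s_n) e^{2πi⟨t,s_n⟩}` and is Bohr almost periodic. -/
theorem tempered_with_atomic_FT_is_AP {d : ℕ}
    (f : 𝓢(Ed d, ℂ) →L[ℂ] ℂ) (b : ℕ → ℂ) (s : ℕ → Ed d)
    (habs : ∀ ψ : 𝓢(Ed d, ℂ), Summable fun n => ‖b n‖ * ‖ψ (s n)‖)
    (hFT : ∀ φ : 𝓢(Ed d, ℂ),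
      f (SchwartzMap.fourierTransformCLM ℂ φ) = ∑' n : ℕ, b n * φ (s n)) :
    ∀ φ : 𝓢(Ed d, ℂ),
      (∀ t : Ed d, f (translateS t φ) =
        ∑' n : ℕ, b n * (𝓕⁻ (fun x => φ x) (s n)) *
          Complex.exp (2 * Real.pi * Complex.I * ((⟪t, s n⟫ : ℝ) : ℂ))) ∧
      IsBohrAP (fun t : Ed d => f (translateS t φ)) := by
  intro φ
  have hval : ∀ t, f (translateS t φ) =
      ∑' n, b n * 𝓕⁻ φ (s n) * (fourierCharInner (s n) t : ℂ) := fun t => by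
    simp only [apply_eq_tsum_fourierInv hFT, fourierInv_translateS_apply, fourierCharInner_apply,
      mul_left_comm, mul_comm]
  refine ⟨fun t => ?_, ?_⟩
  · simp only [hval, fourierCharInner_apply, coe_fourierChar_eq_exp, fourierInv_coe]
  · simp only [hval]
    exact isBohrAP_tsum_mul_addChar _ _ (fun n => continuous_fourierCharInner (s n))
      (by simpa only [norm_mul] using habs (𝓕⁻ φ))
end
end

section
/- Every Fourier quasicrystal on ℝ^d is an almost periodic distribution: if μ is a complex measure in S*(ℝ^d) such that μ̂ is a discrete measure with |μ̂| ∈ S*(ℝ^d), then for every Schwartz function φ the function t ↦ ∫ φ(x−t) μ(dx) is Bohr almost periodic. -/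
open MeasureTheory Metric Filter Topology SchwartzMap
open scoped FourierTransform RealInnerProductSpace

noncomputable section

/-- The pairing of a complex measure, represented by four positive measures
`μ = (μ₀ − μ₁) + i(μ₂ − μ₃)`, with a function. -/
def cIntegral {d : ℕ} (μp : Fin 4 → Measure (Ed d)) (g : Ed d → ℂ) : ℂ :=
  (∫ x, g x ∂(μp 0)) - (∫ x, g x ∂(μp 1)) +
    Complex.I * ((∫ x, g x ∂(μp 2)) - (∫ x, g x ∂(μp 3)))

/-!
Fourier inversion turns the translate `φ(· - t)` into `𝐞 ⟪t, ·⟫ • 𝓕⁻ φ`, so the hypothesis on `μ̂`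
writes `t ↦ μ(φ(· - t))` as the absolutely convergent character series
`∑ bₙ (𝓕⁻ φ)(sₙ) 𝐞 ⟪t, sₙ⟫`. Such a series is Bohr almost periodic: outside a finite set `S`
of frequencies its coefficients are uniformly small, and common `δ`-almost periods of the
characters in `S` are relatively dense, because the closure of the orbit
`{(𝐞 ⟪τ, sₙ⟫)_{n ∈ S} | τ}` in the torus is compact, hence covered by finitely many
`δ`-balls centred at orbit points `τⱼ`, and `x - τⱼ` is such an almost period near `x`.
-/

lemma norm_fourierChar_sub_fourierChar (a b : ℝ) :
    ‖(𝐞 a : ℂ) - 𝐞 b‖ = ‖(𝐞 (a - b) : ℂ) - 1‖ := by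
  have h : (𝐞 a : ℂ) = 𝐞 (a - b) * 𝐞 b := by
    rw [← Circle.coe_mul, ← AddChar.map_add_eq_mul, sub_add_cancel]
  rw [h, ← sub_one_mul, norm_mul, Circle.norm_coe, mul_one]

lemma fourierInv_compSubConstCLM_apply {V : Type*} [NormedAddCommGroup V]
    [InnerProductSpace ℝ V] [MeasurableSpace V] [BorelSpace V] [FiniteDimensional ℝ V]
    (φ : 𝓢(V, ℂ)) (t w : V) :
    𝓕⁻ (φ.compSubConstCLM ℂ t) w = 𝐞 ⟪t, w⟫ • 𝓕⁻ φ w := by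
  have h := congrFun (VectorFourier.fourierIntegral_comp_add_right 𝐞 (volume : Measure V)
    (-innerₗ V) φ (-t)) w
  rw [SchwartzMap.fourierInv_coe, SchwartzMap.fourierInv_coe]
  simp only [Function.comp_def, ← sub_eq_add_neg, map_neg, LinearMap.neg_apply, neg_neg,
    innerₗ_apply_apply] at h
  exact h

section

variable {d : ℕ}

lemma isRelativelyDense_setOf_norm_fourierChar_sub_one_lt {ι : Type*} [Fintype ι]
    (v : ι → Ed d) {δ : ℝ} (hδ : 0 < δ) :
    IsRelativelyDense {τ : Ed d | ∀ i, ‖(𝐞 ⟪τ, v i⟫ : ℂ) - 1‖ < δ} := by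
  let Φ : Ed d → ι → ℂ := fun τ i => 𝐞 ⟪τ, v i⟫
  have hK : IsCompact (closure (Set.range Φ)) := by
    refine (isCompact_closedBall (0 : ι → ℂ) 1).closure_of_subset ?_
    rintro _ ⟨τ, rfl⟩
    simp [Φ, pi_norm_le_iff_of_nonneg zero_le_one, Circle.norm_coe]
  have hcover : closure (Set.range Φ) ⊆ ⋃ τ, ball (Φ τ) δ := by
    intro z hz
    obtain ⟨_, ⟨τ, rfl⟩, hzτ⟩ := Metric.mem_closure_iff.1 hz δ hδ
    exact Set.mem_iUnion.2 ⟨τ, mem_ball.2 hzτ⟩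
  obtain ⟨F, hF⟩ := hK.elim_finite_subcover _ (fun _ => isOpen_ball) hcover
  refine ⟨1 + ∑ τ ∈ F, ‖τ‖, fun x => ?_⟩
  obtain ⟨τ₀, hτ₀F, hxτ₀⟩ := Set.mem_iUnion₂.1 (hF (subset_closure ⟨x, rfl⟩))
  refine ⟨x - τ₀, ?_, fun i => ?_⟩
  · have : ‖τ₀‖ ≤ ∑ τ ∈ F, ‖τ‖ := Finset.single_le_sum (fun τ _ => norm_nonneg τ) hτ₀F
    rw [mem_ball, dist_eq_norm, sub_sub_cancel_left, norm_neg]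
    linarith
  · rw [inner_sub_left, ← norm_fourierChar_sub_fourierChar]
    exact (norm_le_pi_norm (Φ x - Φ τ₀) i).trans_lt (mem_ball_iff_norm.1 hxτ₀)

lemma Summable.exists_finset_tsum_mul_lt {ι : Type*} {a : ι → ℝ} (ha₀ : ∀ i, 0 ≤ a i)
    (ha : Summable a) (M : ℝ) {ε : ℝ} (hε : 0 < ε) :
    ∃ S : Finset ι, ∃ δ > 0, ∀ g : ι → ℝ, (∀ i, g i ∈ Set.Icc 0 M) → (∀ i ∈ S, g i < δ) →
      ∑' i, a i * g i < ε := by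
  set C := ∑' i, a i
  have hC : 0 ≤ C := tsum_nonneg ha₀
  have hcompl : Tendsto (fun S : Finset ι => M * ∑' i : {i // i ∉ S}, a i) atTop (𝓝 (M * 0)) :=
    (tendsto_tsum_compl_atTop_zero a).const_mul M
  obtain ⟨S, hS⟩ := (hcompl.eventually (eventually_lt_nhds (by linarith : M * 0 < ε / 2))).exists
  refine ⟨S, ε / (2 * (C + 1)), by positivity, fun g hg hgS => ?_⟩
  have hag : Summable fun i => a i * g i :=
    (ha.mul_right M).of_nonneg_of_le (fun i => mul_nonneg (ha₀ i) (hg i).1)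
      fun i => mul_le_mul_of_nonneg_left (hg i).2 (ha₀ i)
  have hhead : ∑ i ∈ S, a i * g i < ε / 2 := by
    calc ∑ i ∈ S, a i * g i ≤ ∑ i ∈ S, a i * (ε / (2 * (C + 1))) :=
          Finset.sum_le_sum fun i hi => mul_le_mul_of_nonneg_left (hgS i hi).le (ha₀ i)
      _ ≤ C * (ε / (2 * (C + 1))) := by
          rw [← Finset.sum_mul]
          exact mul_le_mul_of_nonneg_right (ha.sum_le_tsum S fun i _ => ha₀ i) (by positivity)
      _ < ε / 2 := by
          rw [mul_div_assoc', div_lt_div_iff₀ (by positivity) two_pos]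
          nlinarith
  have htail : ∑' i : ↑((S : Set ι)ᶜ), a i * g i ≤ M * ∑' i : {i // i ∉ S}, a i := by
    rw [← tsum_mul_left]
    refine (hag.subtype _).tsum_le_tsum (fun i => ?_) ((ha.subtype _).mul_left M)
    rw [mul_comm M]
    exact mul_le_mul_of_nonneg_left (hg i).2 (ha₀ i)
  rw [← hag.sum_add_tsum_compl (s := S)]
  linarith

lemma norm_fourierChar_inner_add_sub (c : ℂ) (t τ v : Ed d) :
    ‖c * 𝐞 ⟪t + τ, v⟫ - c * 𝐞 ⟪t, v⟫‖ = ‖c‖ * ‖(𝐞 ⟪τ, v⟫ : ℂ) - 1‖ := by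
  rw [← mul_sub, norm_mul, norm_fourierChar_sub_fourierChar, inner_add_left, add_sub_cancel_left]

lemma norm_fourierChar_sub_one_le_two (a : ℝ) : ‖(𝐞 a : ℂ) - 1‖ ≤ 2 :=
  (norm_sub_le _ _).trans (by rw [Circle.norm_coe, norm_one]; norm_num)

lemma isBohrAP_tsum_mul_fourierChar {ι : Type*} (c : ι → ℂ) (v : ι → Ed d)
    (hc : Summable fun i => ‖c i‖) :
    IsBohrAP fun t : Ed d => ∑' i, c i * 𝐞 ⟪t, v i⟫ := by
  have hnorm : ∀ t i, ‖c i * (𝐞 ⟪t, v i⟫ : ℂ)‖ = ‖c i‖ := fun t i => by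
    rw [norm_mul, Circle.norm_coe, mul_one]
  have hsum : ∀ t, Summable fun i => c i * (𝐞 ⟪t, v i⟫ : ℂ) := fun t =>
    Summable.of_norm (by simpa only [hnorm] using hc)
  have hbound : ∀ τ, Summable fun i => ‖c i‖ * ‖(𝐞 ⟪τ, v i⟫ : ℂ) - 1‖ := fun τ =>
    (hc.mul_right 2).of_nonneg_of_le (fun i => by positivity)
      fun i => mul_le_mul_of_nonneg_left (norm_fourierChar_sub_one_le_two _) (norm_nonneg _)
  refine ⟨continuous_tsum (fun i => by fun_prop) hc fun i t => (hnorm t i).le, fun ε hε => ?_⟩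
  obtain ⟨S, δ, hδ, hS⟩ := hc.exists_finset_tsum_mul_lt (fun i => norm_nonneg _) 2 hε
  obtain ⟨R, hR⟩ := isRelativelyDense_setOf_norm_fourierChar_sub_one_lt (fun i : S => v i) hδ
  refine ⟨R, fun x => ?_⟩
  obtain ⟨τ, hτx, hτ⟩ := hR x
  refine ⟨τ, hτx, fun t => ?_⟩
  calc ‖∑' i, c i * 𝐞 ⟪t + τ, v i⟫ - ∑' i, c i * 𝐞 ⟪t, v i⟫‖
      = ‖∑' i, (c i * 𝐞 ⟪t + τ, v i⟫ - c i * 𝐞 ⟪t, v i⟫)‖ := by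
        rw [(hsum _).tsum_sub (hsum _)]
    _ ≤ ∑' i, ‖c i‖ * ‖(𝐞 ⟪τ, v i⟫ : ℂ) - 1‖ :=
        tsum_of_norm_bounded (hbound τ).hasSum fun i => (norm_fourierChar_inner_add_sub _ _ _ _).le
    _ < ε := hS _ (fun i => ⟨norm_nonneg _, norm_fourierChar_sub_one_le_two _⟩)
        fun i hi => hτ ⟨i, hi⟩

lemma isBohrAP_apply_compSubConstCLM_of_apply_fourier_eq_tsum {ι : Type*}
    (T : 𝓢(Ed d, ℂ) → ℂ) (b : ι → ℂ) (s : ι → Ed d)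
    (hFT : ∀ φ : 𝓢(Ed d, ℂ), T (𝓕 φ) = ∑' i, b i * φ (s i))
    (habs : ∀ ψ : 𝓢(Ed d, ℂ), Summable fun i => ‖b i‖ * ‖ψ (s i)‖) (φ : 𝓢(Ed d, ℂ)) :
    IsBohrAP fun t => T (φ.compSubConstCLM ℂ t) := by
  have hT_translate :
      ∀ t, T (φ.compSubConstCLM ℂ t) = ∑' i, b i * 𝓕⁻ φ (s i) * 𝐞 ⟪t, s i⟫ := by
    intro t
    rw [← FourierTransform.fourier_fourierInv_eq (F := 𝓢(Ed d, ℂ)) (φ.compSubConstCLM ℂ t), hFT]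
    refine tsum_congr fun i => ?_
    rw [fourierInv_compSubConstCLM_apply, Circle.smul_def, smul_eq_mul]
    ring
  simp only [hT_translate]
  exact isBohrAP_tsum_mul_fourierChar _ s (by simpa only [norm_mul] using habs (𝓕⁻ φ))

end

theorem fourier_quasicrystal_is_AP_distribution_general {d : ℕ}
    (μp : Fin 4 → Measure (Ed d))
    (T : 𝓢(Ed d, ℂ) →L[ℂ] ℂ)
    (hT : ∀ φ : 𝓢(Ed d, ℂ), T φ = cIntegral μp (fun x => φ x))
    (b : ℕ → ℂ) (s : ℕ → Ed d)
    (hFT : ∀ φ : 𝓢(Ed d, ℂ),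
      T (SchwartzMap.fourierTransformCLM ℂ φ) = ∑' n : ℕ, b n * φ (s n))
    (habs : ∀ ψ : 𝓢(Ed d, ℂ), Summable fun n => ‖b n‖ * ‖ψ (s n)‖) :
    ∀ φ : 𝓢(Ed d, ℂ), IsBohrAP (fun t : Ed d => cIntegral μp (fun x => φ (x - t))) := by
  intro φ
  simpa only [hT, compSubConstCLM_apply] using
    isBohrAP_apply_compSubConstCLM_of_apply_fourier_eq_tsum T b s hFT habs φ

/-- Every Fourier quasicrystal is an almost periodic distribution: if `μ` is a complex
measure belonging to `S*(ℝ^d)` whose Fourier transform is a discrete measure `Σ b_n δ_{s_n}`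
with `|μ̂| ∈ S*(ℝ^d)`, then for every Schwartz `φ` the function `t ↦ ∫ φ(x−t) μ(dx)` is Bohr
almost periodic. -/
theorem fourier_quasicrystal_is_AP_distribution {d : ℕ}
    (μp : Fin 4 → Measure (Ed d))
    (hint : ∀ (φ : 𝓢(Ed d, ℂ)) (i : Fin 4), Integrable (fun x => φ x) (μp i))
    (T : 𝓢(Ed d, ℂ) →L[ℂ] ℂ)
    (hT : ∀ φ : 𝓢(Ed d, ℂ), T φ = cIntegral μp (fun x => φ x))
    (b : ℕ → ℂ) (s : ℕ → Ed d) (hs : Function.Injective s)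
    (hdisc : ∀ n : ℕ, ∃ ε > (0 : ℝ), ∀ m : ℕ, s m ∈ Metric.ball (s n) ε → m = n)
    (hFT : ∀ φ : 𝓢(Ed d, ℂ),
      T (SchwartzMap.fourierTransformCLM ℂ φ) = ∑' n : ℕ, b n * φ (s n))
    (habs : ∀ ψ : 𝓢(Ed d, ℂ), Summable fun n => ‖b n‖ * ‖ψ (s n)‖) :
    ∀ φ : 𝓢(Ed d, ℂ), IsBohrAP (fun t : Ed d => cIntegral μp (fun x => φ (x - t))) :=
  fourier_quasicrystal_is_AP_distribution_general μp T hT b s hFT habs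
end
end
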